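/- Let G = (X ∪ Y, E) be a connected bipartite graph with a convex ordering x_1 < x_2 < ... < x_n of X (i.e., the neighborhood of each y ∈ Y is a set of consecutive vertices in this ordering). Then G has a path P such that every vertex of G is at distance at most 2 from V(P); consequently pe(G) ≤ 2. -/
import Mathlib


open SimpleGraph

variable {V : Type*} [Fintype V] [DecidableEq V]

/-- Distance from a vertex `u` to the vertex set of a walk `P`. -/
noncomputable def walkDist (G : SimpleGraph V) {a b : V} (P : G.Walk a b) (u : V) : ℕ :=
  P.support.toFinset.inf' ⟨a, List.mem_toFinset.mpr P.start_mem_support⟩ (fun x => G.dist u x)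

/-- Eccentricity of a walk: max distance from any vertex of `G` to the walk. -/
noncomputable def eccW (G : SimpleGraph V) {a b : V} (P : G.Walk a b) : ℕ :=
  Finset.univ.sup (walkDist G P)

/-- Path eccentricity of a graph. -/
noncomputable def pe (G : SimpleGraph V) : ℕ :=
  sInf {m | ∃ (a b : V) (P : G.Walk a b), P.IsPath ∧ eccW G P = m}

/-- `P` is a longest path in `G`. -/
def IsLongestPath (G : SimpleGraph V) {a b : V} (P : G.Walk a b) : Prop :=
  P.IsPath ∧ ∀ (c d : V) (Q : G.Walk c d), Q.IsPath → Q.length ≤ P.length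

/-- `G` is `k`-connected. -/
def KConnected (k : ℕ) (G : SimpleGraph V) : Prop :=
  k + 1 ≤ Fintype.card V ∧
    ∀ S : Finset V, S.card < k → (G.induce ((↑S : Set V)ᶜ)).Connected

theorem stmt15 (G : SimpleGraph V) (hG : G.Connected)
    (X Y : Finset V) (hdisj : Disjoint X Y) (hcover : X ∪ Y = Finset.univ)
    (hbip : ∀ u v : V, G.Adj u v → (u ∈ X ∧ v ∈ Y) ∨ (u ∈ Y ∧ v ∈ X))
    (f : V → ℕ) (hf : Set.InjOn f ↑X)
    (hconvex : ∀ y ∈ Y, ∀ x₁ ∈ X, ∀ x₂ ∈ X, ∀ x₃ ∈ X,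
      G.Adj y x₁ → G.Adj y x₃ → f x₁ ≤ f x₂ → f x₂ ≤ f x₃ → G.Adj y x₂) :
    (∃ (a b : V) (P : G.Walk a b), P.IsPath ∧ ∀ u : V, walkDist G P u ≤ 2) ∧
      pe G ≤ 2 := by
  classical
  have hnotboth : ∀ v : V, v ∈ X → v ∈ Y → False := by
    intro v h1 h2
    exact (Finset.disjoint_left.mp hdisj) h1 h2
  have hXY : ∀ {u v : V}, G.Adj u v → u ∈ X → v ∈ Y := by
    intro u v h hu
    rcases hbip u v h with ⟨_, h2⟩ | ⟨h1, _⟩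
    · exact h2
    · exact absurd hu (fun hu => hnotboth u hu h1)
  have hYX : ∀ {u v : V}, G.Adj u v → u ∈ Y → v ∈ X := by
    intro u v h hu
    rcases hbip u v h with ⟨h1, _⟩ | ⟨_, h2⟩
    · exact absurd hu (hnotboth u h1)
    · exact h2
  have key : ∃ (a b : V) (P : G.Walk a b), P.IsPath ∧ ∀ u : V, walkDist G P u ≤ 2 := by
    rcases Finset.eq_empty_or_nonempty X with hX | hXne
    · -- X empty: no edges, so V is a single vertex
      have hnoadj : ∀ u v : V, ¬ G.Adj u v := by
        intro u v h
        rcases hbip u v h with ⟨h1, _⟩ | ⟨_, h2⟩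
        · simp [hX] at h1
        · simp [hX] at h2
      have heq : ∀ u v : V, u = v := by
        intro u v
        obtain ⟨w⟩ := hG.preconnected u v
        cases w with
        | nil => rfl
        | cons h p => exact absurd h (hnoadj _ _)
      have : Nonempty V := hG.nonempty
      obtain ⟨a⟩ := this
      refine ⟨a, a, Walk.nil, Walk.IsPath.nil, ?_⟩
      intro u
      have h1 : walkDist G (Walk.nil : G.Walk a a) u ≤ G.dist u a :=
        Finset.inf'_le _ (List.mem_toFinset.mpr (Walk.start_mem_support _))
      have h2 : G.dist u a = 0 := by rw [heq u a]; exact G.dist_self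
      omega
    · -- X nonempty : build the greedy sweep path
      -- nil case helper
      have nilcase : ∀ x ∈ X,
          (¬ ∃ p : V × V, G.Adj x p.1 ∧ G.Adj p.1 p.2 ∧ f x < f p.2) →
          ∃ b ∈ X, ∃ P : G.Walk x b, P.IsPath ∧ f x ≤ f b ∧
            (∀ v ∈ P.support, (v ∈ X ∧ f x ≤ f v) ∨ (v ∈ Y ∧ ∃ z, G.Adj v z ∧ f x < f z)) ∧
            (∀ x'' ∈ X, f x ≤ f x'' → f x'' ≤ f b → ∃ p ∈ P.support, G.dist x'' p ≤ 1) ∧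
            (∀ y z, G.Adj b y → G.Adj y z → f z ≤ f b) := by
        intro x hx hstep
        refine ⟨x, hx, Walk.nil, Walk.IsPath.nil, le_rfl, ?_, ?_, ?_⟩
        · intro v hv
          simp only [Walk.support_nil, List.mem_singleton] at hv
          subst hv
          exact Or.inl ⟨hx, le_rfl⟩
        · intro x'' hx'' h1 h2
          have hfeq : f x'' = f x := le_antisymm h2 h1
          have : x'' = x := hf (Finset.mem_coe.mpr hx'') (Finset.mem_coe.mpr hx) hfeq
          subst this
          exact ⟨x'', Walk.start_mem_support _, by rw [G.dist_self]; omega⟩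
        · intro y z hy hz
          by_contra hlt
          exact hstep ⟨(y, z), hy, hz, lt_of_not_ge hlt⟩
      have main : ∀ n : ℕ, ∀ x ∈ X, (X.filter fun z => f x < f z).card ≤ n →
          ∃ b ∈ X, ∃ P : G.Walk x b, P.IsPath ∧ f x ≤ f b ∧
            (∀ v ∈ P.support, (v ∈ X ∧ f x ≤ f v) ∨ (v ∈ Y ∧ ∃ z, G.Adj v z ∧ f x < f z)) ∧
            (∀ x'' ∈ X, f x ≤ f x'' → f x'' ≤ f b → ∃ p ∈ P.support, G.dist x'' p ≤ 1) ∧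
            (∀ y z, G.Adj b y → G.Adj y z → f z ≤ f b) := by
        intro n
        induction n with
        | zero =>
          intro x hx hcard
          by_cases hstep : ∃ p : V × V, G.Adj x p.1 ∧ G.Adj p.1 p.2 ∧ f x < f p.2
          · exfalso
            obtain ⟨⟨y, x'⟩, h1, h2, h3⟩ := hstep
            have hyY : y ∈ Y := hXY h1 hx
            have hx' : x' ∈ X := hYX h2 hyY
            have : x' ∈ X.filter fun z => f x < f z := Finset.mem_filter.mpr ⟨hx', h3⟩
            have := Finset.card_pos.mpr ⟨x', this⟩
            omega
          · exact nilcase x hx hstep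
        | succ n ih =>
          intro x hx hcard
          by_cases hstep : ∃ p : V × V, G.Adj x p.1 ∧ G.Adj p.1 p.2 ∧ f x < f p.2
          · -- greedy step: pick the pair (y, x') maximizing f x'
            set S : Finset (V × V) :=
              Finset.univ.filter (fun p : V × V => G.Adj x p.1 ∧ G.Adj p.1 p.2 ∧ f x < f p.2)
              with hS
            have hSne : S.Nonempty := by
              obtain ⟨p, hp⟩ := hstep
              exact ⟨p, by simp [hS, hp.1, hp.2.1, hp.2.2]⟩
            obtain ⟨⟨y, x'⟩, hmem, hmax⟩ := Finset.exists_max_image S (fun p => f p.2) hSne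
            simp only [hS, Finset.mem_filter, Finset.mem_univ, true_and] at hmem
            obtain ⟨hy, hyx', hlt⟩ := hmem
            have hyY : y ∈ Y := hXY hy hx
            have hx' : x' ∈ X := hYX hyx' hyY
            have hreach : ∀ z, G.Adj y z → f z ≤ f x' := by
              intro z hz
              by_cases h : f x < f z
              · exact hmax (y, z) (by simp [hS, hy, hz, h])
              · omega
            have hss : (X.filter fun z => f x' < f z) ⊂ (X.filter fun z => f x < f z) := by
              rw [Finset.ssubset_def]
              constructor
              · intro z hz
                simp only [Finset.mem_filter] at hz ⊢
                exact ⟨hz.1, hlt.trans hz.2⟩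
              · intro hsub
                have := hsub (Finset.mem_filter.mpr ⟨hx', hlt⟩)
                simp only [Finset.mem_filter] at this
                omega
            have hcard' : (X.filter fun z => f x' < f z).card ≤ n := by
              have := Finset.card_lt_card hss
              omega
            obtain ⟨b, hb, Q, hQpath, hx'b, hinv, hcov, hterm⟩ := ih x' hx' hcard'
            have hynotin : y ∉ Q.support := by
              intro hyin
              rcases hinv y hyin with ⟨h1, _⟩ | ⟨_, z, hz1, hz2⟩
              · exact hnotboth y h1 hyY
              · exact absurd (hreach z hz1) (by omega)
            have hxnotin : x ∉ Q.support := by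
              intro hxin
              rcases hinv x hxin with ⟨_, h2⟩ | ⟨h1, _⟩
              · omega
              · exact hnotboth x hx h1
            have hxy : x ≠ y := fun h => hnotboth x hx (h ▸ hyY)
            refine ⟨b, hb, Walk.cons hy (Walk.cons hyx' Q), ?_, by omega, ?_, ?_, hterm⟩
            · refine Walk.IsPath.cons (Walk.IsPath.cons hQpath hynotin) ?_
              simp only [Walk.support_cons, List.mem_cons]
              push_neg
              exact ⟨hxy, hxnotin⟩
            · intro v hv
              simp only [Walk.support_cons, List.mem_cons] at hv
              rcases hv with rfl | rfl | hv
              · exact Or.inl ⟨hx, le_rfl⟩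
              · exact Or.inr ⟨hyY, x', hyx', hlt⟩
              · rcases hinv v hv with ⟨h1, h2⟩ | ⟨h1, z, hz1, hz2⟩
                · exact Or.inl ⟨h1, by omega⟩
                · exact Or.inr ⟨h1, z, hz1, by omega⟩
            · intro x'' hx'' h1 h2
              rcases le_or_gt (f x') (f x'') with h | h
              · obtain ⟨p, hp, hdp⟩ := hcov x'' hx'' h h2
                refine ⟨p, ?_, hdp⟩
                simp only [Walk.support_cons, List.mem_cons]
                exact Or.inr (Or.inr hp)
              · -- x ≤ f x'' < f x' : convexity gives y adjacent to x''
                have hadj : G.Adj y x'' :=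
                  hconvex y hyY x hx x'' hx'' x' hx' hy.symm hyx' h1 (le_of_lt h)
                refine ⟨y, ?_, ?_⟩
                · simp [Walk.support_cons]
                · have := G.dist_le (Walk.cons hadj.symm Walk.nil)
                  simpa using this
          · exact nilcase x hx hstep
      -- start at the minimum of f over X
      obtain ⟨x0, hx0, hmin⟩ := Finset.exists_min_image X f hXne
      obtain ⟨b, hb, P, hPpath, _, _, hcov, hterm⟩ :=
        main (X.filter fun z => f x0 < f z).card x0 hx0 le_rfl
      -- b dominates all of X
      have crossing : ∀ (v c : V) (w : G.Walk v c), c ∈ X →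
          (∀ y z, G.Adj c y → G.Adj y z → f z ≤ f c) →
          ((v ∈ X → f v ≤ f c) ∧ (v ∈ Y → ∀ z, G.Adj v z → f z ≤ f c)) := by
        intro v c w
        induction w with
        | nil =>
          intro hc _
          exact ⟨fun _ => le_rfl, fun hvY => absurd hc (fun hc => hnotboth _ hc hvY)⟩
        | @cons u u' c h p ih =>
          intro hc hterm'
          obtain ⟨ihX, ihY⟩ := ih hc hterm'
          constructor
          · intro hu
            have hu' : u' ∈ Y := hXY h hu
            exact ihY hu' u h.symm
          · intro hu z hz
            have hu' : u' ∈ X := hYX h hu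
            have hzX : z ∈ X := hYX hz hu
            by_cases hle : f z ≤ f c
            · exact hle
            · exfalso
              have hub : G.Adj u c :=
                hconvex u hu u' hu' c hc z hzX h hz (ihX hu') (by omega)
              exact absurd (hterm' u z hub.symm hz) hle
      have hall : ∀ x'' ∈ X, f x'' ≤ f b := by
        intro x'' hx''
        obtain ⟨w⟩ := hG.preconnected x'' b
        exact (crossing x'' b w hb hterm).1 hx''
      -- every X-vertex is within distance 1 of the path
      have hXdist : ∀ x'' ∈ X, ∃ p ∈ P.support, G.dist x'' p ≤ 1 := by
        intro x'' hx''
        exact hcov x'' hx'' (hmin x'' hx'') (hall x'' hx'')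
      refine ⟨x0, b, P, hPpath, ?_⟩
      intro u
      have humem : u ∈ X ∨ u ∈ Y := by
        have : u ∈ X ∪ Y := by rw [hcover]; exact Finset.mem_univ u
        exact Finset.mem_union.mp this
      have hexists : ∃ p ∈ P.support, G.dist u p ≤ 2 := by
        rcases humem with hu | hu
        · obtain ⟨p, hp, hdp⟩ := hXdist u hu
          exact ⟨p, hp, by omega⟩
        · -- u ∈ Y : it has a neighbor in X
          have hub : u ≠ b := fun h => hnotboth b hb (h ▸ hu)
          obtain ⟨w⟩ := hG.preconnected u b
          obtain ⟨t, ht⟩ : ∃ t, G.Adj u t := by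
            cases w with
            | nil => exact absurd rfl hub
            | cons h p => exact ⟨_, h⟩
          have htX : t ∈ X := hYX ht hu
          obtain ⟨p, hp, hdp⟩ := hXdist t htX
          refine ⟨p, hp, ?_⟩
          have h1 : G.dist u p ≤ G.dist u t + G.dist t p := hG.dist_triangle
          have h2 : G.dist u t ≤ 1 := by
            have := G.dist_le (Walk.cons ht Walk.nil)
            simpa using this
          omega
      obtain ⟨p, hp, hdp⟩ := hexists
      have : walkDist G P u ≤ G.dist u p :=
        Finset.inf'_le _ (List.mem_toFinset.mpr hp)
      omega
  refine ⟨key, ?_⟩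
  obtain ⟨a, b, P, hP, hd⟩ := key
  have h2 : eccW G P ≤ 2 := Finset.sup_le fun u _ => hd u
  have h1 : pe G ≤ eccW G P := Nat.sInf_le ⟨a, b, P, hP, rfl⟩
  omega
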